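/- arXiv:1812.10509 — 2 statements merged into one kernel-verified Lean document; each statement's English description precedes it below -/
import Mathlib

section
/- Let f be a nonnegative, nondecreasing, bounded function on [0,1]. Suppose there exist constants 0 < σ < 1, 0 < θ < 1, M > 0, β > 0 such that f(s) ≤ θ f(t) + M/(t-s)^β for all σ < s < t < 1. Then sup_{s ∈ [0,σ]} f(s) ≤ C·M for some constant C depending only on σ, θ, β. -/
/-!
Weight `f` by `(1 - s) ^ β`, the `β`-th power of the distance to the right endpoint. Applying the
hypothesis with `t` chosen so that `1 - t = τ (1 - s)` bounds the weighted function at `s` by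
`θ / τ ^ β` times its value at `t` plus `M / (1 - τ) ^ β`. For `τ ^ β > θ` the factor is `< 1`,
so the supremum of the weighted function, finite because `f` is bounded, absorbs itself and is at
most a constant times `M`. Monotonicity then transfers the bound to `[0, σ]`.
-/

open Set

lemma exists_lt_rpow_of_lt_one {θ β : ℝ} (hθ0 : 0 ≤ θ) (hθ1 : θ < 1) (hβ : 0 < β) :
    ∃ τ : ℝ, 0 < τ ∧ τ < 1 ∧ θ < τ ^ β := by
  have hpos : 0 < (θ + 1) / 2 := by linarith
  refine ⟨((θ + 1) / 2) ^ β⁻¹, by positivity,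
    Real.rpow_lt_one hpos.le (by linarith) (inv_pos.mpr hβ), ?_⟩
  rw [Real.rpow_inv_rpow hpos.le hβ.ne']
  linarith

lemma bddAbove_rpow_sub_mul_image {f : ℝ → ℝ} {a b β : ℝ} (hβ : 0 ≤ β)
    (hf0 : ∀ x ∈ Ioo a b, 0 ≤ f x) (hf : BddAbove (f '' Ioo a b)) :
    BddAbove ((fun x => (b - x) ^ β * f x) '' Ioo a b) := by
  obtain ⟨B, hB⟩ := hf
  refine ⟨(b - a) ^ β * B, ?_⟩
  rintro _ ⟨x, hx, rfl⟩
  have hba : 0 ≤ b - a := by linarith [hx.1, hx.2]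
  have hweight : (b - x) ^ β ≤ (b - a) ^ β :=
    Real.rpow_le_rpow (by linarith [hx.2]) (by linarith [hx.1]) hβ
  exact mul_le_mul hweight (hB (mem_image_of_mem f hx)) (hf0 x hx) (Real.rpow_nonneg hba β)

section Absorption

variable {f : ℝ → ℝ} {a b θ β τ M : ℝ}

lemma rpow_sub_mul_le_of_le_add_div_rpow {s t : ℝ} (hτ0 : 0 < τ) (hτ1 : τ < 1)
    (hs : s < b) (ht : t = b - τ * (b - s)) (hst : f s ≤ θ * f t + M / (t - s) ^ β) :
    (b - s) ^ β * f s ≤ θ / τ ^ β * ((b - t) ^ β * f t) + M / (1 - τ) ^ β := by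
  have hbs : 0 < b - s := by linarith
  have hgap : (t - s) ^ β = (1 - τ) ^ β * (b - s) ^ β := by
    rw [← Real.mul_rpow (by linarith) hbs.le, ht]; ring_nf
  have hrest : (b - t) ^ β = τ ^ β * (b - s) ^ β := by
    rw [← Real.mul_rpow hτ0.le hbs.le, ht]; ring_nf
  have hbsβ : 0 < (b - s) ^ β := Real.rpow_pos_of_pos hbs β
  calc (b - s) ^ β * f s ≤ (b - s) ^ β * (θ * f t + M / (t - s) ^ β) :=
        mul_le_mul_of_nonneg_left hst hbsβ.le
    _ = θ / τ ^ β * ((b - t) ^ β * f t) + M / (1 - τ) ^ β := by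
        rw [hgap, hrest]; field_simp

theorem rpow_sub_mul_le_of_le_add_div_rpow_of_bddAbove (hθ : 0 ≤ θ) (hτ0 : 0 < τ) (hτ1 : τ < 1)
    (hθτ : θ < τ ^ β) (hbdd : BddAbove ((fun x => (b - x) ^ β * f x) '' Ioo a b))
    (hf : ∀ s t, a < s → s < t → t < b → f s ≤ θ * f t + M / (t - s) ^ β) :
    ∀ s ∈ Ioo a b, (b - s) ^ β * f s ≤ M / ((1 - τ) ^ β * (1 - θ / τ ^ β)) := by
  set w : ℝ → ℝ := fun x => (b - x) ^ β * f x
  set Φ := sSup (w '' Ioo a b)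
  have hq : θ / τ ^ β < 1 := (div_lt_one (hθ.trans_lt hθτ)).mpr hθτ
  have hstep : ∀ s ∈ Ioo a b, w s ≤ θ / τ ^ β * Φ + M / (1 - τ) ^ β := by
    rintro s ⟨has, hsb⟩
    set t := b - τ * (b - s) with ht
    have hts : s < t := by nlinarith
    have htb : t < b := by nlinarith
    calc w s ≤ θ / τ ^ β * w t + M / (1 - τ) ^ β :=
          rpow_sub_mul_le_of_le_add_div_rpow hτ0 hτ1 hsb ht (hf s t has hts htb)
      _ ≤ θ / τ ^ β * Φ + M / (1 - τ) ^ β := by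
          gcongr
          exact le_csSup hbdd (mem_image_of_mem w ⟨has.trans hts, htb⟩)
  intro s hs
  have hΦ : Φ ≤ θ / τ ^ β * Φ + M / (1 - τ) ^ β :=
    csSup_le ⟨w s, mem_image_of_mem w hs⟩ (forall_mem_image.mpr hstep)
  have hws : w s ≤ Φ := le_csSup hbdd (mem_image_of_mem w hs)
  rw [← div_div, le_div_iff₀ (by linarith)]
  nlinarith

end Absorption

/-- Iteration (absorption) lemma: if `f` is nonnegative, nondecreasing and bounded on `[0,1]`
and satisfies `f s ≤ θ f t + M/(t-s)^β` for `σ < s < t < 1`, then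
`sup_{s ∈ [0,σ]} f s ≤ C M` with `C = C(σ, θ, β)`. -/
theorem stmt_0 (σ θ β : ℝ) (hσ : 0 < σ) (hσ1 : σ < 1) (hθ : 0 < θ) (hθ1 : θ < 1)
    (hβ : 0 < β) :
    ∃ C : ℝ, 0 < C ∧ ∀ (f : ℝ → ℝ) (M : ℝ), 0 < M →
      (∀ s ∈ Set.Icc (0:ℝ) 1, 0 ≤ f s) →
      MonotoneOn f (Set.Icc (0:ℝ) 1) →
      BddAbove (f '' Set.Icc (0:ℝ) 1) →
      (∀ s t : ℝ, σ < s → s < t → t < 1 → f s ≤ θ * f t + M / (t - s) ^ β) →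
      ∀ s ∈ Set.Icc (0:ℝ) σ, f s ≤ C * M := by
  obtain ⟨τ, hτ0, hτ1, hθτ⟩ := exists_lt_rpow_of_lt_one hθ.le hθ1 hβ
  obtain ⟨r, hr⟩ : (Ioo σ 1).Nonempty := nonempty_Ioo.mpr hσ1
  have hD : 0 < (1 - τ) ^ β * (1 - θ / τ ^ β) := by
    refine mul_pos (Real.rpow_pos_of_pos (by linarith) β) ?_
    rw [sub_pos, div_lt_one (hθ.trans hθτ)]
    exact hθτ
  have h1r : 0 < (1 - r) ^ β := Real.rpow_pos_of_pos (by linarith [hr.2]) β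
  refine ⟨((1 - r) ^ β * ((1 - τ) ^ β * (1 - θ / τ ^ β)))⁻¹, by positivity, ?_⟩
  intro f M _ hf0 hmono hbdd hf s hs
  have hIoo : Ioo σ 1 ⊆ Icc 0 1 := Ioo_subset_Icc_self.trans (Icc_subset_Icc_left hσ.le)
  have hwbdd := bddAbove_rpow_sub_mul_image hβ.le (fun x hx => hf0 x (hIoo hx))
    (hbdd.mono (image_mono hIoo))
  have hfr := rpow_sub_mul_le_of_le_add_div_rpow_of_bddAbove hθ.le hτ0 hτ1 hθτ hwbdd hf r hr
  rw [le_div_iff₀ hD] at hfr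
  calc f s ≤ f r := hmono ⟨hs.1, hs.2.trans hσ1.le⟩ (hIoo hr) (hs.2.trans hr.1.le)
    _ ≤ _ := by
      rw [inv_mul_eq_div, le_div_iff₀ (mul_pos h1r hD)]
      linarith
end

section
/- Let λ > 1 and let v₀ ∈ L³_{loc}(ℝ³ \ {0}) be λ-DSS, i.e., v₀(x) = λ v₀(λx) for a.e. x. Suppose ∫_A |v₀|³ < ∞ where A = {x : 1/2 ≤ |x| < (3/2)λ}. Then for every ε > 0 there exists μ ∈ (0, 1/2] such that sup_{x ≠ 0} ∫_{B_{μ|x|}(x)} |v₀|³ ≤ ε. -/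
/-!
By discrete self-similarity, the `L³` energy of `B_{μ|x|}(x)` equals that of the ball obtained
by rescaling `x` into the compact annulus `K = {1 ≤ |z| ≤ λ}`. For `μ ≤ 1/2` such balls lie in
`A`, where `|v₀|³ dx` is a finite measure without atoms; a Lebesgue number argument on `K` then
gives one radius `r` with all balls `B_r(z)`, `z ∈ K`, of mass at most `ε`, and
`μ = min (1/2) (r/λ)` works.
-/

open MeasureTheory Metric
open scoped ENNReal NNReal

noncomputable abbrev E3 := EuclideanSpace ℝ (Fin 3)

open Set Module
open scoped Pointwise

def IsDiscretelySelfSimilar {E F : Type*} [MeasurableSpace E] [SMul ℝ E] [SMul ℝ F]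
    (μ : Measure E) (c : ℝ) (v : E → F) : Prop :=
  ∀ᵐ x ∂μ, v x = c • v (c • x)

section Scaling

variable {E F : Type*} [NormedAddCommGroup E] [NormedSpace ℝ E] [MeasurableSpace E]
  [BorelSpace E] [FiniteDimensional ℝ E] (μ : Measure E) [μ.IsAddHaarMeasure]
  [NormedAddCommGroup F] [NormedSpace ℝ F]

theorem setLIntegral_comp_smul_of_pos (g : E → ℝ≥0∞) (s : Set E) {R : ℝ} (hR : 0 < R) :
    ∫⁻ x in s, g (R • x) ∂μ = ENNReal.ofReal ((R ^ finrank ℝ E)⁻¹) * ∫⁻ x in R • s, g x ∂μ := by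
  have he := measurableEmbedding_const_smul₀ (α := E) hR.ne'
  have hs : (R • ·) ⁻¹' (R • s) = s := by rw [preimage_smul₀ hR.ne', inv_smul_smul₀ hR.ne']
  conv_lhs => rw [← hs]
  rw [← he.lintegral_map, ← he.restrict_map, Measure.map_addHaar_smul μ hR.ne',
    abs_of_pos (by positivity), Measure.restrict_smul, lintegral_smul_measure, smul_eq_mul]

/-- The exponent `d = finrank ℝ E` is the scale-invariant one: the factor `c ^ d` from `‖v‖ ^ d`
cancels the Jacobian `c ^ (-d)` of `x ↦ c • x`. -/
theorem IsDiscretelySelfSimilar.setLIntegral_ball_smul {c : ℝ} (hc : 0 < c) {v : E → F}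
    (hv : IsDiscretelySelfSimilar μ c v) (x : E) (r : ℝ) :
    ∫⁻ y in ball x r, ENNReal.ofReal (‖v y‖ ^ finrank ℝ E) ∂μ
      = ∫⁻ y in ball (c • x) (c * r), ENNReal.ofReal (‖v y‖ ^ finrank ℝ E) ∂μ := by
  set d := finrank ℝ E
  have hv' : ∀ᵐ y ∂μ, ENNReal.ofReal (‖v y‖ ^ d)
      = ENNReal.ofReal (c ^ d) * ENNReal.ofReal (‖v (c • y)‖ ^ d) := by
    filter_upwards [hv] with y hy
    rw [hy, norm_smul, Real.norm_of_nonneg hc.le, mul_pow, ENNReal.ofReal_mul (by positivity)]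
  rw [setLIntegral_congr_fun_ae measurableSet_ball (hv'.mono fun y hy _ ↦ hy),
    lintegral_const_mul' _ _ ENNReal.ofReal_ne_top,
    setLIntegral_comp_smul_of_pos μ (fun z ↦ ENNReal.ofReal (‖v z‖ ^ d)) _ hc,
    _root_.smul_ball hc.ne', Real.norm_of_nonneg hc.le, ← mul_assoc,
    ← ENNReal.ofReal_mul (by positivity), mul_inv_cancel₀ (by positivity), ENNReal.ofReal_one,
    one_mul]

theorem IsDiscretelySelfSimilar.setLIntegral_ball_zpow_smul {c : ℝ} (hc : 0 < c) {v : E → F}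
    (hv : IsDiscretelySelfSimilar μ c v) (n : ℤ) (x : E) (r : ℝ) :
    ∫⁻ y in ball x r, ENNReal.ofReal (‖v y‖ ^ finrank ℝ E) ∂μ
      = ∫⁻ y in ball (c ^ n • x) (c ^ n * r), ENNReal.ofReal (‖v y‖ ^ finrank ℝ E) ∂μ := by
  have step := hv.setLIntegral_ball_smul μ hc
  induction n using Int.induction_on with
  | zero => simp
  | succ n ih =>
    rw [ih, step, smul_smul, ← mul_assoc, ← zpow_one_add₀ hc.ne', add_comm]
  | pred n ih =>
    rw [ih, step (c ^ (-n - 1 : ℤ) • x), smul_smul, ← mul_assoc, ← zpow_one_add₀ hc.ne',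
      add_sub_cancel]

end Scaling

theorem exists_pos_forall_measure_ball_le {X : Type*} [MetricSpace X] [MeasurableSpace X]
    [OpensMeasurableSpace X] (ν : Measure X) [IsFiniteMeasure ν] [NullSingletonClass ν] {K : Set X}
    (hK : IsCompact K) {ε : ℝ≥0∞} (hε : 0 < ε) : ∃ r > 0, ∀ z ∈ K, ν (ball z r) ≤ ε := by
  have hsmall : ∀ z : X, ∃ ρ > 0, ν (ball z ρ) ≤ ε := by
    intro z
    have hlim := tendsto_measure_cthickening (μ := ν) (s := {z}) ⟨1, one_pos, measure_ne_top _ _⟩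
    rw [closure_singleton, measure_singleton] at hlim
    obtain ⟨ρ, hρ, hρε⟩ := Metric.eventually_nhds_iff.1 (hlim.eventually_lt_const hε)
    refine ⟨ρ / 2, half_pos hρ,
      (measure_mono (t := cthickening (ρ / 2) {z}) ?_).trans (hρε (y := ρ / 2) ?_).le⟩
    · rw [cthickening_singleton z (half_pos hρ).le]
      exact ball_subset_closedBall
    · rw [Real.dist_0_eq_abs, abs_of_pos (half_pos hρ)]
      exact half_lt_self hρ
  choose ρ hρ hρε using hsmall
  obtain ⟨r, hr, hball⟩ := lebesgue_number_lemma_of_metric hK (fun z ↦ isOpen_ball)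
    fun z _ ↦ mem_iUnion.2 ⟨z, mem_ball_self (hρ z)⟩
  refine ⟨r, hr, fun z hz ↦ ?_⟩
  obtain ⟨w, hw⟩ := hball z hz
  exact (measure_mono hw).trans (hρε w)

theorem exists_zpow_smul_mem_closedBall_diff_ball {E : Type*} [NormedAddCommGroup E]
    [NormedSpace ℝ E] {c : ℝ} (hc : 1 < c) {x : E} (hx : x ≠ 0) :
    ∃ n : ℤ, c ^ n • x ∈ closedBall 0 c \ ball 0 1 := by
  have hc0 : 0 < c := zero_lt_one.trans hc
  obtain ⟨m, hm, hm'⟩ := exists_mem_Ico_zpow (norm_pos_iff.2 hx) hc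
  refine ⟨-m, ?_⟩
  have hnorm : ‖c ^ (-m) • x‖ = ‖x‖ / c ^ m := by
    rw [norm_smul, Real.norm_of_nonneg (by positivity), zpow_neg, inv_mul_eq_div]
  rw [Set.mem_sdiff, mem_closedBall_zero_iff, mem_ball_zero_iff, not_lt, hnorm,
    div_le_iff₀ (by positivity), one_le_div (by positivity), ← zpow_one_add₀ hc0.ne', add_comm]
  exact ⟨hm'.le, hm⟩

theorem ball_mul_norm_subset_annulus {E : Type*} [SeminormedAddCommGroup E] {c μ : ℝ}
    (hμ : μ ≤ 1 / 2) {z : E} (hz : z ∈ closedBall 0 c \ ball 0 1) :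
    ball z (μ * ‖z‖) ⊆ {y | 1 / 2 ≤ ‖y‖ ∧ ‖y‖ < 3 / 2 * c} := by
  intro y hy
  rw [Set.mem_sdiff, mem_closedBall_zero_iff, mem_ball_zero_iff, not_lt] at hz
  have hyz : ‖y - z‖ < ‖z‖ / 2 := by
    rw [mem_ball, dist_eq_norm] at hy
    nlinarith
  constructor <;> linarith [norm_le_insert y z, norm_le_insert' y z]

theorem stmt_13_general (lam : ℝ) (hlam : 1 < lam) (v₀ : E3 → E3)
    (hdss : ∀ᵐ x : E3, v₀ x = lam • v₀ (lam • x))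
    (hA : (∫⁻ x in {x : E3 | 1 / 2 ≤ ‖x‖ ∧ ‖x‖ < (3 / 2) * lam},
        ENNReal.ofReal (‖v₀ x‖ ^ 3)) < ∞)
    (ε : ℝ) (hε : 0 < ε) :
    ∃ μ : ℝ, 0 < μ ∧ μ ≤ 1 / 2 ∧ ∀ x : E3, x ≠ 0 →
      (∫⁻ y in ball x (μ * ‖x‖), ENNReal.ofReal (‖v₀ y‖ ^ 3)) ≤ ENNReal.ofReal ε := by
  have hlam0 : 0 < lam := zero_lt_one.trans hlam
  set A := {x : E3 | 1 / 2 ≤ ‖x‖ ∧ ‖x‖ < (3 / 2) * lam}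
  set ν := (volume.restrict A).withDensity fun y ↦ ENNReal.ofReal (‖v₀ y‖ ^ 3)
  have : IsFiniteMeasure ν := ⟨by rwa [withDensity_apply _ .univ, Measure.restrict_univ]⟩
  obtain ⟨r, hr, hsmall⟩ := exists_pos_forall_measure_ball_le ν
    ((isCompact_closedBall (0 : E3) lam).diff isOpen_ball) (ENNReal.ofReal_pos.2 hε)
  set μ := min (1 / 2) (r / lam)
  refine ⟨μ, by positivity, min_le_left _ _, fun x hx ↦ ?_⟩
  obtain ⟨n, hz⟩ := exists_zpow_smul_mem_closedBall_diff_ball hlam hx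
  set z := lam ^ n • x
  have hμz : μ * ‖z‖ ≤ r := calc
    μ * ‖z‖ ≤ r / lam * lam := mul_le_mul (min_le_right _ _) (mem_closedBall_zero_iff.1 hz.1)
      (norm_nonneg _) (by positivity)
    _ = r := div_mul_cancel₀ r hlam0.ne'
  have hradius : lam ^ n * (μ * ‖x‖) = μ * ‖z‖ := by
    rw [norm_smul, Real.norm_of_nonneg (zpow_pos hlam0 n).le, mul_left_comm]
  have hscale := IsDiscretelySelfSimilar.setLIntegral_ball_zpow_smul volume hlam0 hdss n x
    (μ * ‖x‖)
  rw [finrank_euclideanSpace_fin, hradius] at hscale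
  calc ∫⁻ y in ball x (μ * ‖x‖), ENNReal.ofReal (‖v₀ y‖ ^ 3)
      = ν (ball z (μ * ‖z‖)) := by
        rw [hscale, withDensity_apply _ measurableSet_ball,
          Measure.restrict_restrict measurableSet_ball,
          inter_eq_self_of_subset_left (ball_mul_norm_subset_annulus (min_le_left _ _) hz)]
    _ ≤ ν (ball z r) := measure_mono (ball_subset_ball hμz)
    _ ≤ ENNReal.ofReal ε := hsmall z hz

/-- Uniform local `L³`-smallness for DSS data: if `v₀` is `λ`-DSS
(`v₀(x) = λ v₀(λx)` a.e.) with `∫_A |v₀|³ < ∞` on the annulus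
`A = {1/2 ≤ |x| < (3/2)λ}`, then for every `ε > 0` there is `μ ∈ (0, 1/2]` with
`sup_{x ≠ 0} ∫_{B_{μ|x|}(x)} |v₀|³ ≤ ε`. -/
theorem stmt_13 (lam : ℝ) (hlam : 1 < lam) (v₀ : E3 → E3)
    (hmeas : Measurable v₀)
    (hdss : ∀ᵐ x : E3, v₀ x = lam • v₀ (lam • x))
    (hA : (∫⁻ x in {x : E3 | 1 / 2 ≤ ‖x‖ ∧ ‖x‖ < (3 / 2) * lam},
        ENNReal.ofReal (‖v₀ x‖ ^ 3)) < ∞)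
    (ε : ℝ) (hε : 0 < ε) :
    ∃ μ : ℝ, 0 < μ ∧ μ ≤ 1 / 2 ∧ ∀ x : E3, x ≠ 0 →
      (∫⁻ y in ball x (μ * ‖x‖), ENNReal.ofReal (‖v₀ y‖ ^ 3)) ≤ ENNReal.ofReal ε :=
  stmt_13_general lam hlam v₀ hdss hA ε hε
end
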